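/- Let n ≥ 1 be a natural number and let z₁, z₂ be nonzero complex numbers whose arguments satisfy |Arg z₁| < π/(2(n+1)) and |Arg z₂| < π/(2(n+1)). Then the φ-distance between z₁ and z₂ equals |z₁^{n+1} − z₂^{n+1}|/(n+1); i.e., the infimum over all C¹ paths γ : [0,1] → ℂ with γ(0) = z₁, γ(1) = z₂ of ∫₀¹ |γ(t)|ⁿ ‖γ'(t)‖ dt equals |z₁^{n+1} − z₂^{n+1}|/(n+1). -/

import Mathlib

/-!
The branch `w = z ^ (n + 1) / (n + 1)` satisfies `|dw| = |z|ⁿ |dz|`. Hence every C¹ path has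
φ-length at least `|Δw|`: this is `‖∫ (γ ^ (n + 1))'‖ ≤ ∫ ‖(γ ^ (n + 1))'‖`, and holds for
arbitrary endpoints. Conversely, the sector condition puts `z₁ ^ (n + 1)` and `z₂ ^ (n + 1)` in
the right half-plane, which is convex and lies in the slit plane, so the principal `(n + 1)`-st
root of the segment between them is a C¹ path from `z₁` to `z₂` of φ-length exactly `|Δw|`.
The segment is traversed via `smoothTransition`, so that the path is C¹ on all of `ℝ` while
never leaving the half-plane.
-/

open Complex intervalIntegral Real

noncomputable def phiLength (n : ℕ) (γ : ℝ → ℂ) : ℝ :=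
  ∫ t in (0:ℝ)..1, ‖γ t‖ ^ n * ‖deriv γ t‖

theorem norm_pow_succ_sub_le_phiLength (n : ℕ) {γ : ℝ → ℂ} (hγ : ContDiff ℝ 1 γ) :
    ‖γ 1 ^ (n + 1) - γ 0 ^ (n + 1)‖ ≤ (n + 1) * phiLength n γ := by
  have hderiv (t : ℝ) : HasDerivAt (fun s ↦ γ s ^ (n + 1))
      (((n + 1 : ℕ) : ℂ) * γ t ^ n * deriv γ t) t := by
    simpa using (hγ.differentiable one_ne_zero t).hasDerivAt.fun_pow (n + 1)
  have hcont : Continuous fun t ↦ ((n + 1 : ℕ) : ℂ) * γ t ^ n * deriv γ t := by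
    have hγc := hγ.continuous
    have hγ'c := hγ.continuous_deriv le_rfl
    fun_prop
  rw [← integral_eq_sub_of_hasDerivAt (fun t _ ↦ hderiv t) (hcont.intervalIntegrable 0 1),
    phiLength, ← integral_const_mul]
  refine (norm_integral_le_integral_norm zero_le_one).trans_eq (integral_congr fun t _ ↦ ?_)
  simp only [norm_mul, norm_pow, Complex.norm_natCast]
  push_cast
  ring

section Sector

variable {m : ℕ}

theorem abs_lt_pi_div_two_mul_iff (hm : m ≠ 0) {θ : ℝ} :
    |θ| < π / (2 * m) ↔ |m * θ| < π / 2 := by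
  have hm' : (0 : ℝ) < m := by positivity
  rw [abs_mul, Nat.abs_cast, ← lt_div_iff₀' hm', div_div, mul_comm]

theorem mem_Ioc_of_abs_lt_pi_div_two_mul (hm : m ≠ 0) {θ : ℝ} (h : |θ| < π / (2 * m)) :
    θ ∈ Set.Ioc (-(π / m)) (π / m) := by
  have hm' : (0 : ℝ) < m := by positivity
  have hlt : π / (2 * m) < π / m := div_lt_div_of_pos_left pi_pos hm' (by linarith)
  obtain ⟨h₁, h₂⟩ := abs_lt.1 h
  exact ⟨by linarith, by linarith⟩

theorem Complex.arg_pow_of_abs_arg_lt (hm : m ≠ 0) {z : ℂ} (h : |arg z| < π / (2 * m)) :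
    arg (z ^ m) = m * arg z := by
  rw [← arg_coe_angle_toReal_eq_arg, arg_pow_coe_angle]
  refine ((Real.Angle.nsmul_toReal_eq_mul hm).2 ?_).trans (by rw [arg_coe_angle_toReal_eq_arg])
  rw [arg_coe_angle_toReal_eq_arg, neg_div]
  exact mem_Ioc_of_abs_lt_pi_div_two_mul hm h

theorem Complex.re_pow_pos_of_abs_arg_lt (hm : m ≠ 0) {z : ℂ} (hz : z ≠ 0)
    (h : |arg z| < π / (2 * m)) : 0 < (z ^ m).re := by
  have harg := (abs_lt_pi_div_two_mul_iff hm).1 h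
  rw [← arg_pow_of_abs_arg_lt hm h, abs_arg_lt_pi_div_two_iff] at harg
  exact harg.resolve_right (pow_ne_zero m hz)

theorem Complex.pow_cpow_nat_inv_of_abs_arg_lt (hm : m ≠ 0) {z : ℂ}
    (h : |arg z| < π / (2 * m)) : (z ^ m) ^ (m⁻¹ : ℂ) = z :=
  have harg := mem_Ioc_of_abs_lt_pi_div_two_mul hm h
  pow_cpow_nat_inv hm harg.1 harg.2

end Sector

theorem Complex.norm_cpow_nat_inv_pow_mul_norm_deriv {n : ℕ} {u : ℂ} (hu : u ≠ 0) :
    ‖u ^ ((n + 1 : ℕ) : ℂ)⁻¹‖ ^ n * ‖((n + 1 : ℕ) : ℂ)⁻¹ * u ^ (((n + 1 : ℕ) : ℂ)⁻¹ - 1)‖ =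
      ((n : ℝ) + 1)⁻¹ := by
  have hsub : u ^ (((n + 1 : ℕ) : ℂ)⁻¹ - 1) = u ^ ((n + 1 : ℕ) : ℂ)⁻¹ / u := by
    rw [cpow_sub _ _ hu, cpow_one]
  rw [hsub]
  set r := u ^ ((n + 1 : ℕ) : ℂ)⁻¹
  have hr : r ^ (n + 1) = u := cpow_nat_inv_pow u n.succ_ne_zero
  have hr0 : ‖r‖ ≠ 0 :=
    norm_ne_zero_iff.2 fun h ↦ hu (by rw [← hr, h, zero_pow n.succ_ne_zero])
  rw [← hr, norm_mul, norm_div, norm_pow, pow_succ, norm_inv, Complex.norm_natCast]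
  field_simp
  push_cast
  ring

section RootPath

variable {n : ℕ} {s : ℝ → ℂ}

theorem hasDerivAt_cpow_const_comp {s' : ℂ} {t : ℝ} {c : ℂ} (hs : HasDerivAt s s' t)
    (h : s t ∈ slitPlane) : HasDerivAt (fun t ↦ s t ^ c) (c * s t ^ (c - 1) * s') t :=
  (hasStrictDerivAt_cpow_const h).hasDerivAt.comp t hs

theorem contDiff_cpow_const_comp {c : ℂ} (hs : ContDiff ℝ 1 s)
    (hslit : ∀ t, s t ∈ slitPlane) :
    ContDiff ℝ 1 fun t ↦ s t ^ c := by
  have hd (t : ℝ) : HasDerivAt (fun t ↦ s t ^ c) (c * s t ^ (c - 1) * deriv s t) t :=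
    hasDerivAt_cpow_const_comp (hs.differentiable one_ne_zero t).hasDerivAt (hslit t)
  rw [contDiff_one_iff_deriv, funext fun t ↦ (hd t).deriv]
  refine ⟨fun t ↦ (hd t).differentiableAt, ?_⟩
  exact (continuous_const.mul (hs.continuous.cpow continuous_const hslit)).mul
    (hs.continuous_deriv le_rfl)

theorem phiLength_cpow_nat_inv (hs : Differentiable ℝ s) (hslit : ∀ t, s t ∈ slitPlane) :
    phiLength n (fun t ↦ s t ^ ((n + 1 : ℕ) : ℂ)⁻¹) =
      (∫ t in (0:ℝ)..1, ‖deriv s t‖) / (n + 1) := by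
  rw [phiLength, div_eq_mul_inv, ← integral_mul_const]
  congr 1 with t
  rw [(hasDerivAt_cpow_const_comp (hs t).hasDerivAt (hslit t)).deriv, norm_mul, ← mul_assoc,
    norm_cpow_nat_inv_pow_mul_norm_deriv (slitPlane_ne_zero (hslit t)), mul_comm]

end RootPath

section SmoothSegment

variable {E : Type*} [NormedAddCommGroup E] [NormedSpace ℝ E]

noncomputable def smoothSegment (a b : E) (t : ℝ) : E := a + smoothTransition t • (b - a)

variable {a b : E}

@[simp] theorem smoothSegment_zero : smoothSegment a b 0 = a := by simp [smoothSegment]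

@[simp] theorem smoothSegment_one : smoothSegment a b 1 = b := by simp [smoothSegment]

theorem smoothSegment_mem_segment (t : ℝ) : smoothSegment a b t ∈ segment ℝ a b := by
  rw [segment_eq_image']
  exact ⟨_, ⟨smoothTransition.nonneg t, smoothTransition.le_one t⟩, rfl⟩

theorem contDiff_smoothSegment {k : ℕ∞} : ContDiff ℝ k (smoothSegment a b) :=
  contDiff_const.add (smoothTransition.contDiff.smul contDiff_const)

theorem integral_norm_deriv_smoothSegment :
    ∫ t in (0:ℝ)..1, ‖deriv (smoothSegment a b) t‖ = ‖b - a‖ := by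
  have hτ : ContDiff ℝ 1 smoothTransition := smoothTransition.contDiff
  have hd (t : ℝ) : HasDerivAt (smoothSegment a b) (deriv smoothTransition t • (b - a)) t :=
    ((hτ.differentiable one_ne_zero t).hasDerivAt.smul_const _).const_add a
  simp_rw [fun t ↦ (hd t).deriv, norm_smul, Real.norm_eq_abs,
    abs_of_nonneg smoothTransition.monotone.deriv_nonneg, integral_mul_const]
  rw [integral_deriv_eq_sub (fun t _ ↦ hτ.differentiable one_ne_zero t)
    ((hτ.continuous_deriv le_rfl).intervalIntegrable 0 1)]
  simp

end SmoothSegment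

theorem phi_distance_in_sector_general (n : ℕ) (z₁ z₂ : ℂ)
    (hz₁ : z₁ ≠ 0) (hz₂ : z₂ ≠ 0)
    (harg₁ : |Complex.arg z₁| < Real.pi / (2 * (n + 1)))
    (harg₂ : |Complex.arg z₂| < Real.pi / (2 * (n + 1))) :
    sInf {L : ℝ | ∃ γ : ℝ → ℂ, ContDiff ℝ 1 γ ∧ γ 0 = z₁ ∧ γ 1 = z₂ ∧
        L = ∫ t in (0:ℝ)..1, ‖γ t‖ ^ n * ‖deriv γ t‖} =
      ‖z₁ ^ (n + 1) - z₂ ^ (n + 1)‖ / (n + 1) := by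
  have hn : n + 1 ≠ 0 := n.succ_ne_zero
  replace harg₁ : |arg z₁| < π / (2 * (n + 1 : ℕ)) := by exact_mod_cast harg₁
  replace harg₂ : |arg z₂| < π / (2 * (n + 1 : ℕ)) := by exact_mod_cast harg₂
  set s := smoothSegment (z₁ ^ (n + 1)) (z₂ ^ (n + 1))
  have hslit (t : ℝ) : s t ∈ slitPlane :=
    mem_slitPlane_iff.2 <| .inl <| (convex_halfSpace_re_gt 0).segment_subset
      (re_pow_pos_of_abs_arg_lt hn hz₁ harg₁) (re_pow_pos_of_abs_arg_lt hn hz₂ harg₂)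
      (smoothSegment_mem_segment t)
  refine IsLeast.csInf_eq ⟨⟨fun t ↦ s t ^ ((n + 1 : ℕ) : ℂ)⁻¹,
    contDiff_cpow_const_comp contDiff_smoothSegment hslit, ?_, ?_, ?_⟩, ?_⟩
  · simpa [s] using pow_cpow_nat_inv_of_abs_arg_lt hn harg₁
  · simpa [s] using pow_cpow_nat_inv_of_abs_arg_lt hn harg₂
  · rw [← phiLength, phiLength_cpow_nat_inv
        ((contDiff_smoothSegment (k := 1)).differentiable one_ne_zero) hslit,
      integral_norm_deriv_smoothSegment, norm_sub_rev]
  · rintro L ⟨γ, hγ, rfl, rfl, rfl⟩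
    rw [div_le_iff₀' (by positivity), norm_sub_rev]
    exact norm_pow_succ_sub_le_phiLength n hγ

/-- For `n ≥ 1` and nonzero `z₁, z₂` with `|Arg z₁| < π/(2(n+1))` and
`|Arg z₂| < π/(2(n+1))`, the `φ`-distance between `z₁` and `z₂` equals
`|z₁^{n+1} − z₂^{n+1}|/(n+1)`. -/
theorem phi_distance_in_sector (n : ℕ) (hn : 1 ≤ n) (z₁ z₂ : ℂ)
    (hz₁ : z₁ ≠ 0) (hz₂ : z₂ ≠ 0)
    (harg₁ : |Complex.arg z₁| < Real.pi / (2 * (n + 1)))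
    (harg₂ : |Complex.arg z₂| < Real.pi / (2 * (n + 1))) :
    sInf {L : ℝ | ∃ γ : ℝ → ℂ, ContDiff ℝ 1 γ ∧ γ 0 = z₁ ∧ γ 1 = z₂ ∧
        L = ∫ t in (0:ℝ)..1, ‖γ t‖ ^ n * ‖deriv γ t‖} =
      ‖z₁ ^ (n + 1) - z₂ ^ (n + 1)‖ / (n + 1) :=
  phi_distance_in_sector_general n z₁ z₂ hz₁ hz₂ harg₁ harg₂
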